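/- Let F be a family of finite simple graphs, all on r vertices, let H be a graph with chromatic number χ(H) = k ≥ 3, and let γ > 0. Then there exists n₀ such that for every n ≥ n₀ and every H-free graph G on n vertices, G has a spanning subgraph G' that is K_k-free and satisfies |P(F,G) − P(F,G')| ≤ γ·n^r. -/

import Mathlib

open Filter Topology

/-- The number of `r`-element subsets of the vertex set of `G` that induce a subgraph
isomorphic to some member of the family `𝓕`. -/
noncomputable def famCount {r : ℕ} {β : Type*} [Fintype β]
    (𝓕 : Set (SimpleGraph (Fin r))) (G : SimpleGraph β) : ℕ :=
  Set.ncard {s : Finset β | s.card = r ∧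
    ∃ F ∈ 𝓕, Nonempty (F ≃g SimpleGraph.induce (↑s : Set β) G)}

/-- `G` is `H`-free: `G` contains no subgraph isomorphic to `H` (not necessarily
induced), i.e. there is no injective graph homomorphism from `H` to `G`. -/
def HFree {γ β : Type*} (H : SimpleGraph γ) (G : SimpleGraph β) : Prop :=
  ¬ ∃ f : γ ↪ β, ∀ a b, H.Adj a b → G.Adj (f a) (f b)

/-- `i_H(𝓕,n)`: the maximum of `p(𝓕,G)` over `H`-free graphs `G` on `n` vertices. -/
noncomputable def iHn {γ : Type*} (H : SimpleGraph γ) {r : ℕ}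
    (𝓕 : Set (SimpleGraph (Fin r))) (n : ℕ) : ℝ :=
  sSup {x : ℝ | ∃ G : SimpleGraph (Fin n), HFree H G ∧
    x = (famCount 𝓕 G : ℝ) / (n.choose r)}

/-- `i_H(𝓕) = lim_{n → ∞} i_H(𝓕,n)`. -/
noncomputable def iH {γ : Type*} (H : SimpleGraph γ) {r : ℕ}
    (𝓕 : Set (SimpleGraph (Fin r))) : ℝ :=
  limUnder atTop (fun n => iHn H 𝓕 n)

/-- The Zykov symmetrization of `F` at the (nonadjacent) pair `x, y`: the neighborhood of
`x` is replaced by that of `y`, so that `x` and `y` become nonadjacent twins. -/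
def zykov {α : Type*} (F : SimpleGraph α) (x y : α) : SimpleGraph α where
  Adj a b := a ≠ b ∧
    ((a = x ∧ F.Adj y b) ∨ (b = x ∧ F.Adj a y) ∨ (a ≠ x ∧ b ≠ x ∧ F.Adj a b))
  symm := by
    constructor
    rintro a b ⟨hab, h⟩
    refine ⟨hab.symm, ?_⟩
    rcases h with ⟨h1, h2⟩ | ⟨h1, h2⟩ | ⟨h1, h2, h3⟩
    · exact Or.inr (Or.inl ⟨h1, h2.symm⟩)
    · exact Or.inl ⟨h1, h2.symm⟩
    · exact Or.inr (Or.inr ⟨h2, h1, h3.symm⟩)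
  loopless := ⟨fun a h => h.1 rfl⟩

/-- A family of graphs (all of the same order) is symmetrizable if it is closed under
Zykov symmetrization, up to isomorphism. -/
def Symmetrizable {r : ℕ} (𝓕 : Set (SimpleGraph (Fin r))) : Prop :=
  ∀ F ∈ 𝓕, ∀ x y : Fin r, x ≠ y → ¬ F.Adj x y →
    ∃ F' ∈ 𝓕, Nonempty (zykov F x y ≃g F')

/-!
Apply Szemerédi's regularity lemma with a uniformity parameter `ε₁` much smaller than the density
threshold `ε / 4`, and delete the edges inside parts, between irregular pairs and between sparse
pairs. This changes at most `2εn²` ordered adjacencies, and each of them lies in at most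
`n ^ (r - 2)` of the `r`-sets, so `P(𝓕, ·)` moves by at most `2εn ^ r`. The reduced graph is
`K_k`-free: a `k`-clique in it meets `k` parts that are pairwise `ε₁`-uniform of density at least
`ε / 4`, and a greedy embedding, vertex by vertex, of the `k`-colourable graph `H` into these parts
keeps enough common neighbours available at every step, contradicting `H`-freeness.
-/

open Finset SimpleGraph Function

lemma Finset.card_sub_one_le_card_erase {α : Type*} [DecidableEq α] (u : Finset α) (a : α) :
    (#u : ℝ) - 1 ≤ #(u.erase a) := by
  have := Nat.sub_le_iff_le_add.1 (pred_card_le_card_erase (s := u) (a := a))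
  rw [sub_le_iff_le_add]
  exact_mod_cast this

section Uniform

variable {α : Type*} [DecidableEq α] {G : SimpleGraph α} [DecidableRel G.Adj] {ε d : ℝ}

lemma SimpleGraph.edgeDensity_lt_of_forall_card_filter_adj_lt {s t : Finset α} {x : ℝ} (hs : s.Nonempty)
    (h : ∀ a ∈ s, (#{b ∈ t | G.Adj a b} : ℝ) < x * #t) : (G.edgeDensity s t : ℝ) < x := by
  obtain ⟨a, ha⟩ := hs
  obtain rfl | ht := t.eq_empty_or_nonempty
  · simpa using h a ha
  rw [edgeDensity_def]
  push_cast
  rw [div_lt_iff₀ (by have := ht.card_pos; have := card_pos.2 ⟨a, ha⟩; positivity)]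
  calc (#(G.interedges s t) : ℝ) ≤ ∑ a ∈ s, (#{b ∈ t | G.Adj a b} : ℝ) := by
        rw [interedges, Rel.interedges_eq_biUnion]
        exact_mod_cast card_biUnion_le.trans_eq (by simp)
    _ < ∑ _a ∈ s, x * #t := sum_lt_sum_of_nonempty ⟨a, ha⟩ h
    _ = x * (#s * #t) := by rw [sum_const, nsmul_eq_mul]; ring

lemma SimpleGraph.IsUniform.card_filter_card_filter_adj_lt_le {s t u : Finset α} (hst : G.IsUniform ε s t)
    (hd : d ≤ G.edgeDensity s t) (hut : u ⊆ t) (hu : #t * ε ≤ #u) :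
    (#{a ∈ s | #{b ∈ u | G.Adj a b} < (d - ε) * #u} : ℝ) ≤ #s * ε := by
  by_contra! h
  have hne : ({a ∈ s | #{b ∈ u | G.Adj a b} < (d - ε) * #u}).Nonempty := by
    rw [← card_pos]
    exact_mod_cast (mul_nonneg (Nat.cast_nonneg _) hst.pos.le).trans_lt h
  have hunif := hst (filter_subset _ s) hut h.le hu
  have hlow := edgeDensity_lt_of_forall_card_filter_adj_lt hne fun a ha => (mem_filter.1 ha).2
  rw [abs_sub_lt_iff] at hunif
  linarith

end Uniform

section Counting

variable {β : Type*} [Fintype β] [DecidableEq β] {r : ℕ}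

-- Multiplied by `n ^ 2` rather than bounded by `n ^ (r - 2)`, which is wrong for `r < 2`.
lemma card_filter_mem_mem_mul_sq_le {x y : β} (hxy : x ≠ y) :
    #{s ∈ powersetCard r univ | x ∈ s ∧ y ∈ s} * Fintype.card β ^ 2 ≤ Fintype.card β ^ r := by
  obtain hr | hr := lt_or_ge r 2
  · convert Nat.zero_le _
    simp only [mul_eq_zero, card_eq_zero, filter_eq_empty_iff, mem_powersetCard, not_and]
    refine .inl fun s ⟨_, hs⟩ hx hy => ?_
    have := card_le_card (insert_subset hx (singleton_subset_iff.2 hy))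
    rw [card_pair hxy] at this
    omega
  calc #{s ∈ powersetCard r univ | x ∈ s ∧ y ∈ s} * Fintype.card β ^ 2
      ≤ #((powersetCard (r - 2) univ).image (· ∪ {x, y})) * Fintype.card β ^ 2 := by
        gcongr
        intro s hs
        simp only [mem_filter, mem_powersetCard] at hs
        obtain ⟨⟨-, hsr⟩, hx, hy⟩ := hs
        have hxys : {x, y} ⊆ s := insert_subset hx (singleton_subset_iff.2 hy)
        refine mem_image.2 ⟨s \ {x, y}, ?_, sdiff_union_of_subset hxys⟩
        rw [mem_powersetCard, card_sdiff_of_subset hxys, card_pair hxy, hsr]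
        exact ⟨subset_univ _, rfl⟩
    _ ≤ (Fintype.card β).choose (r - 2) * Fintype.card β ^ 2 := by
        gcongr
        exact card_image_le.trans (by rw [card_powersetCard, card_univ])
    _ ≤ Fintype.card β ^ (r - 2) * Fintype.card β ^ 2 := by gcongr; exact Nat.choose_le_pow _ _
    _ = Fintype.card β ^ r := pow_sub_mul_pow _ hr

omit [Fintype β] [DecidableEq β] in
lemma induce_eq_of_forall_adj_iff {G G' : SimpleGraph β} {s : Set β}
    (h : ∀ x ∈ s, ∀ y ∈ s, (G.Adj x y ↔ G'.Adj x y)) : G.induce s = G'.induce s := by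
  ext ⟨x, hx⟩ ⟨y, hy⟩
  exact h x hx y hy

variable (𝓕 : Set (SimpleGraph (Fin r)))

lemma famCount_le_add_card_biUnion {G G' : SimpleGraph β} {D : Finset (β × β)}
    (hD : ∀ x y, ¬(G.Adj x y ↔ G'.Adj x y) → (x, y) ∈ D) :
    famCount 𝓕 G ≤
      famCount 𝓕 G' + #(D.biUnion fun p => {s ∈ powersetCard r univ | p.1 ∈ s ∧ p.2 ∈ s}) := by
  rw [famCount, famCount, ← Set.ncard_coe_finset]
  refine (Set.ncard_le_ncard ?_ (Set.toFinite _)).trans (Set.ncard_union_le _ _)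
  rintro s ⟨hsr, F, hF, ⟨e⟩⟩
  by_cases hs : ∀ x ∈ s, ∀ y ∈ s, (G.Adj x y ↔ G'.Adj x y)
  · rw [induce_eq_of_forall_adj_iff hs] at e
    exact .inl ⟨hsr, F, hF, ⟨e⟩⟩
  · push Not at hs
    obtain ⟨x, hx, y, hy, hxy⟩ := hs
    refine .inr (mem_biUnion.2 ⟨(x, y), hD x y fun h => hxy.elim (by tauto) (by tauto), ?_⟩)
    simp [hsr, hx, hy]

theorem abs_famCount_sub_mul_sq_le {G G' : SimpleGraph β} {D : Finset (β × β)}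
    (hD : ∀ x y, ¬(G.Adj x y ↔ G'.Adj x y) → (x, y) ∈ D) (hD₀ : ∀ p ∈ D, p.1 ≠ p.2) :
    |(famCount 𝓕 G : ℝ) - famCount 𝓕 G'| * Fintype.card β ^ 2 ≤ #D * Fintype.card β ^ r := by
  set N := #(D.biUnion fun p => {s ∈ powersetCard r univ | p.1 ∈ s ∧ p.2 ∈ s})
  have hN : N * Fintype.card β ^ 2 ≤ #D * Fintype.card β ^ r := by
    refine (Nat.mul_le_mul_right _ card_biUnion_le).trans ?_
    rw [sum_mul, ← smul_eq_mul]
    exact sum_le_card_nsmul _ _ _ fun p hp => card_filter_mem_mem_mul_sq_le (hD₀ p hp)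
  have h₁ : (famCount 𝓕 G : ℝ) ≤ famCount 𝓕 G' + N := by
    exact_mod_cast famCount_le_add_card_biUnion 𝓕 hD
  have h₂ : (famCount 𝓕 G' : ℝ) ≤ famCount 𝓕 G + N := by
    exact_mod_cast famCount_le_add_card_biUnion 𝓕 fun x y h => hD x y fun h' => h h'.symm
  calc |(famCount 𝓕 G : ℝ) - famCount 𝓕 G'| * Fintype.card β ^ 2
      ≤ (N : ℝ) * Fintype.card β ^ 2 := by
        gcongr
        exact abs_sub_le_iff.2 ⟨by linarith, by linarith⟩
    _ ≤ (#D : ℝ) * Fintype.card β ^ r := by exact_mod_cast hN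

end Counting

section Embedding

variable {α γ ι : Type*} {G : SimpleGraph α} {H : SimpleGraph γ} [DecidableRel H.Adj]
  {κ : γ → ι} {V : ι → Finset α} {ρ ε d : ℝ}

variable (G H) in
/-- The state of a greedy embedding of `H` into `G` along `κ`: the vertices of `S` are embedded
by `f`, and each other vertex `y` keeps a set `C y ⊆ V (κ y)` of candidate images, which shrinks
by a factor `ρ` for each embedded neighbour and by one element for each embedded vertex. -/
structure IsPartialEmbedding (κ : γ → ι) (V : ι → Finset α) (ρ : ℝ) (S : Finset γ)
    (f : γ → α) (C : γ → Finset α) : Prop where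
  subset : ∀ y ∉ S, C y ⊆ V (κ y)
  card_le : ∀ y ∉ S, ρ ^ #{x ∈ S | H.Adj x y} * #(V (κ y)) - #S ≤ #(C y)
  adj : ∀ y ∉ S, ∀ x ∈ S, H.Adj x y → ∀ a ∈ C y, G.Adj (f x) a
  notMem : ∀ y ∉ S, ∀ x ∈ S, f x ∉ C y
  injOn : Set.InjOn f S
  map_adj : ∀ x ∈ S, ∀ y ∈ S, H.Adj x y → G.Adj (f x) (f y)

lemma isPartialEmbedding_empty (f : γ → α) :
    IsPartialEmbedding G H κ V ρ ∅ f fun y => V (κ y) where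
  subset _ _ := subset_rfl
  card_le _ _ := by simp
  adj _ _ _ h := absurd h (notMem_empty _)
  notMem _ _ _ h := absurd h (notMem_empty _)
  injOn := by simp
  map_adj _ h := absurd h (notMem_empty _)

namespace IsPartialEmbedding

variable {S : Finset γ} {f : γ → α} {C : γ → Finset α}

lemma card_mul_lt_card [Fintype γ] (h : IsPartialEmbedding G H κ V ρ S f C) (hρ₀ : 0 ≤ ρ)
    (hρ₁ : ρ ≤ 1)    (hpow : (Fintype.card γ + 1) * ε ≤ ρ ^ Fintype.card γ)
    (hsize : ∀ i, (Fintype.card γ : ℝ) < ε * #(V i)) {y : γ} (hy : y ∉ S) :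
    Fintype.card γ * ε * #(V (κ y)) < #(C y) := by
  have hS : (#S : ℝ) ≤ Fintype.card γ := by exact_mod_cast card_le_univ S
  have hρ : ρ ^ Fintype.card γ ≤ ρ ^ #{x ∈ S | H.Adj x y} :=
    pow_le_pow_of_le_one hρ₀ hρ₁ (card_le_univ _)
  have hV : (0 : ℝ) ≤ #(V (κ y)) := Nat.cast_nonneg _
  calc Fintype.card γ * ε * #(V (κ y))
      < (Fintype.card γ + 1) * ε * #(V (κ y)) - Fintype.card γ := by linarith [hsize (κ y)]
    _ ≤ ρ ^ #{x ∈ S | H.Adj x y} * #(V (κ y)) - #S := by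
        gcongr
        exact hpow.trans hρ
    _ ≤ #(C y) := h.card_le y hy

variable [DecidableEq α] [DecidableEq γ] [DecidableRel G.Adj]

lemma insert (h : IsPartialEmbedding G H κ V ρ S f C) (hρ₀ : 0 ≤ ρ) (hρ₁ : ρ ≤ 1) {y₀ : γ}
    (hy₀ : y₀ ∉ S) {a : α} (ha : a ∈ C y₀)
    (htyp : ∀ y ∉ S, H.Adj y₀ y → ρ * #(C y) ≤ #{b ∈ C y | G.Adj a b}) :
    IsPartialEmbedding G H κ V ρ (insert y₀ S) (update f y₀ a)
      fun y => {b ∈ C y | H.Adj y₀ y → G.Adj a b}.erase a where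
  subset y hy := ((erase_subset _ _).trans (filter_subset _ _)).trans
    (h.subset y (fun h' => hy (mem_insert_of_mem h')))
  card_le y hy := by
    have hyS : y ∉ S := fun h' => hy (mem_insert_of_mem h')
    have hold := h.card_le y hyS
    rw [filter_insert, card_insert_of_notMem hy₀]
    by_cases hadj : H.Adj y₀ y
    · rw [if_pos hadj, card_insert_of_notMem (fun h' => hy₀ (mem_filter.1 h').1), pow_succ]
      simp only [hadj, forall_const]
      have := card_sub_one_le_card_erase {b ∈ C y | G.Adj a b} a
      have := htyp y hyS hadj
      have : ρ * #S ≤ #S := mul_le_of_le_one_left (Nat.cast_nonneg _) hρ₁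
      push_cast
      nlinarith
    · rw [if_neg hadj]
      simp only [hadj, false_imp_iff, filter_true]
      have := card_sub_one_le_card_erase (C y) a
      push_cast
      linarith
  adj y hy x hx hxy b hb := by
    have hyS := fun h' => hy (mem_insert_of_mem h')
    obtain ⟨hbC, hba⟩ := mem_filter.1 (mem_of_mem_erase hb)
    rcases mem_insert.1 hx with rfl | hx
    · rw [update_self]
      exact hba hxy
    · rw [update_of_ne (ne_of_mem_of_not_mem hx hy₀)]
      exact h.adj y hyS x hx hxy b hbC
  notMem y hy x hx hb := by
    rcases mem_insert.1 hx with rfl | hx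
    · rw [update_self] at hb
      exact notMem_erase _ _ hb
    · rw [update_of_ne (ne_of_mem_of_not_mem hx hy₀)] at hb
      exact h.notMem y (fun h' => hy (mem_insert_of_mem h')) x hx
        (filter_subset _ _ (mem_of_mem_erase hb))
  injOn := by
    have hfS : Set.EqOn (update f y₀ a) f S := fun x hx =>
      update_of_ne (ne_of_mem_of_not_mem hx hy₀) _ _
    rw [coe_insert, Set.injOn_insert (mem_coe.not.2 hy₀), hfS.image_eq, update_self]
    refine ⟨h.injOn.congr hfS.symm, ?_⟩
    rintro ⟨x, hx, rfl⟩
    exact h.notMem y₀ hy₀ x hx ha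
  map_adj x hx y hy hxy := by
    have hupd {z} (hz : z ∈ S) : update f y₀ a z = f z :=
      update_of_ne (ne_of_mem_of_not_mem hz hy₀) _ _
    rcases mem_insert.1 hx with hx | hx <;> rcases mem_insert.1 hy with hy | hy
    · exact absurd (hx.trans hy.symm ▸ hxy) H.irrefl
    · rw [hx, update_self, hupd hy]
      exact (h.adj y₀ hy₀ y hy (hx ▸ hxy.symm) a ha).symm
    · rw [hy, update_self, hupd hx]
      exact h.adj y₀ hy₀ x hx (hy ▸ hxy) a ha
    · rw [hupd hx, hupd hy]
      exact h.map_adj x hx y hy hxy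

lemma exists_mem_forall_le_card_filter_adj [Fintype γ]
    (h : IsPartialEmbedding G H κ V (d - ε) S f C)
    (hκ : ∀ x y, H.Adj x y → κ x ≠ κ y) (hε : 0 ≤ ε) (hεd : ε ≤ d) (hd : d ≤ 1)
    (hpow : (Fintype.card γ + 1) * ε ≤ (d - ε) ^ Fintype.card γ)
    (hsize : ∀ i, (Fintype.card γ : ℝ) < ε * #(V i))
    (hunif : ∀ i j, i ≠ j → G.IsUniform ε (V i) (V j))
    (hdens : ∀ i j, i ≠ j → d ≤ G.edgeDensity (V i) (V j)) {y₀ : γ} (hy₀ : y₀ ∉ S) :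
    ∃ a ∈ C y₀, ∀ y ∉ S, H.Adj y₀ y → (d - ε) * #(C y) ≤ #{b ∈ C y | G.Adj a b} := by
  have hC y (hy : y ∉ S) : Fintype.card γ * ε * #(V (κ y)) < #(C y) :=
    h.card_mul_lt_card (sub_nonneg.2 hεd) (by linarith) hpow hsize hy
  have hγ : (1 : ℝ) ≤ Fintype.card γ := by exact_mod_cast Fintype.card_pos_iff.2 ⟨y₀⟩
  -- By uniformity each unembedded neighbour `y` of `y₀` rules out at most `ε * #(V (κ y₀))`
  -- vertices, and `C y₀` is larger than all of these together.
  set N := {y ∈ Sᶜ | H.Adj y₀ y}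
  set bad := N.biUnion fun y => {a ∈ V (κ y₀) | #{b ∈ C y | G.Adj a b} < (d - ε) * #(C y)}
  have hbad : (#bad : ℝ) < #(C y₀) := calc
    (#bad : ℝ) ≤ ∑ y ∈ N, (#{a ∈ V (κ y₀) | #{b ∈ C y | G.Adj a b} < (d - ε) * #(C y)} : ℝ) := by
        exact_mod_cast card_biUnion_le
    _ ≤ ∑ _y ∈ N, (#(V (κ y₀)) * ε : ℝ) := by
        refine sum_le_sum fun y hy => ?_
        obtain ⟨hyS, hadj⟩ := mem_filter.1 hy
        rw [mem_compl] at hyS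
        refine (hunif _ _ (hκ _ _ hadj)).card_filter_card_filter_adj_lt_le
          (hdens _ _ (hκ _ _ hadj)) (h.subset y hyS) ?_
        nlinarith [hC y hyS, Nat.cast_nonneg (α := ℝ) (#(V (κ y)))]
    _ ≤ Fintype.card γ * ε * #(V (κ y₀)) := by
        rw [sum_const, nsmul_eq_mul, mul_comm (#(V (κ y₀)) : ℝ), ← mul_assoc]
        gcongr
        exact_mod_cast card_le_univ N
    _ < #(C y₀) := hC y₀ hy₀
  obtain ⟨a, ha, hab⟩ := exists_mem_notMem_of_card_lt_card (by exact_mod_cast hbad)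
  refine ⟨a, ha, fun y hy hadj => ?_⟩
  by_contra! hlt
  exact hab (mem_biUnion.2 ⟨y, by simp [N, hy, hadj], mem_filter.2 ⟨h.subset y₀ hy₀ ha, hlt⟩⟩)

end IsPartialEmbedding

theorem not_hFree_of_isUniform [Fintype γ] [DecidableEq γ] [DecidableEq α] [DecidableRel G.Adj]
    [Nonempty α] (hκ : ∀ x y, H.Adj x y → κ x ≠ κ y) (hε : 0 ≤ ε)
    (hεd : ε ≤ d) (hd : d ≤ 1) (hpow : (Fintype.card γ + 1) * ε ≤ (d - ε) ^ Fintype.card γ)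
    (hsize : ∀ i, (Fintype.card γ : ℝ) < ε * #(V i))
    (hunif : ∀ i j, i ≠ j → G.IsUniform ε (V i) (V j))
    (hdens : ∀ i j, i ≠ j → d ≤ G.edgeDensity (V i) (V j)) : ¬HFree H G := by
  have hS (S : Finset γ) : ∃ f C, IsPartialEmbedding G H κ V (d - ε) S f C := by
    induction S using Finset.induction_on with
    | empty => exact ⟨_, _, isPartialEmbedding_empty fun _ => Classical.arbitrary α⟩
    | insert y₀ S hy₀ ih =>
      obtain ⟨f, C, h⟩ := ih
      obtain ⟨a, ha, htyp⟩ :=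
        h.exists_mem_forall_le_card_filter_adj hκ hε hεd hd hpow hsize hunif hdens hy₀
      exact ⟨_, _, h.insert (sub_nonneg.2 hεd) (by linarith) hy₀ ha htyp⟩
  obtain ⟨f, C, h⟩ := hS univ
  exact fun hG => hG ⟨⟨f, fun x y hxy => h.injOn (mem_univ x) (mem_univ y) hxy⟩,
    fun x y hxy => h.map_adj x (mem_univ x) y (mem_univ y) hxy⟩

end Embedding

section Reduced

variable {α : Type*} [Fintype α] [DecidableEq α] {G : SimpleGraph α} [DecidableRel G.Adj]
  {P : Finpartition (univ : Finset α)} {ε δ : ℝ}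

lemma filter_adj_not_regularityReduced_adj_subset :
    {p ∈ (univ ×ˢ univ : Finset (α × α)) |
        G.Adj p.1 p.2 ∧ ¬(G.regularityReduced P ε δ).Adj p.1 p.2} ⊆
      (P.nonUniforms G ε).biUnion (fun UV => UV.1 ×ˢ UV.2) ∪ P.parts.biUnion offDiag ∪
        (P.sparsePairs G δ).biUnion fun UV => G.interedges UV.1 UV.2 := by
  rintro ⟨x, y⟩
  simp only [mem_filter, mem_univ, regularityReduced_adj, not_and, not_exists, not_le,
    mem_biUnion, mem_union, mem_product, Prod.exists, mem_offDiag, or_assoc, and_assoc,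
    P.mk_mem_nonUniforms, Finpartition.mk_mem_sparsePairs, mem_interedges_iff, true_and]
  rintro ⟨hxy, h⟩
  obtain ⟨U, hU, hx⟩ := P.exists_mem (mem_univ x)
  obtain ⟨V, hV, hy⟩ := P.exists_mem (mem_univ y)
  obtain rfl | hUV := eq_or_ne U V
  · exact .inr (.inl ⟨U, hU, hx, hy, G.ne_of_adj hxy⟩)
  by_cases hGUV : G.IsUniform ε U V
  · exact .inr (.inr ⟨U, V, hU, hV, hUV, h hxy U hU V hV hx hy hUV hGUV, hx, hy, hxy⟩)
  · exact .inl ⟨U, V, hU, hV, hUV, hGUV, hx, hy⟩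

theorem card_filter_adj_not_regularityReduced_adj_le [Nonempty α] (hP : P.IsEquipartition)
    (hPG : P.IsUniform G ε) (hε : 0 < ε) (hδ : 0 ≤ δ) {η : ℝ} (hη : 0 < η)
    (hparts : 4 / η ≤ #P.parts) :
    (#{p ∈ (univ ×ˢ univ : Finset (α × α)) |
        G.Adj p.1 p.2 ∧ ¬(G.regularityReduced P ε δ).Adj p.1 p.2} : ℝ) ≤
      (4 * ε + η / 2 + 4 * δ) * Fintype.card α ^ 2 := by
  calc _ ≤ (#((P.nonUniforms G ε).biUnion (fun UV => UV.1 ×ˢ UV.2) ∪ P.parts.biUnion offDiag ∪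
          (P.sparsePairs G δ).biUnion fun UV => G.interedges UV.1 UV.2) : ℝ) := by
        gcongr; exact filter_adj_not_regularityReduced_adj_subset
    _ ≤ #((P.nonUniforms G ε).biUnion (fun UV => UV.1 ×ˢ UV.2)) + #(P.parts.biUnion offDiag) +
          #((P.sparsePairs G δ).biUnion fun UV => G.interedges UV.1 UV.2) := by
        exact_mod_cast (card_union_le _ _).trans (by gcongr; exact card_union_le _ _)
    _ ≤ 4 * ε * #(univ : Finset α) ^ 2 + η / 2 * #(univ : Finset α) ^ 2 +
          4 * δ * #(univ : Finset α) ^ 2 := by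
        gcongr
        · exact (hP.sum_nonUniforms_lt univ_nonempty hε hPG).le
        · exact hP.card_biUnion_offDiag_le hη hparts
        · exact hP.card_interedges_sparsePairs_le hδ
    _ = _ := by rw [card_univ]; ring

lemma Finpartition.IsEquipartition.le_card_of_mem_parts {P : Finpartition (univ : Finset α)}
    (hP : P.IsEquipartition) {b N : ℕ} (hb : #P.parts ≤ b) (hN : b * N ≤ Fintype.card α)
    {U : Finset α} (hU : U ∈ P.parts) : N ≤ #U := by
  have hpos : 0 < #P.parts := card_pos.2 ⟨U, hU⟩
  calc N ≤ Fintype.card α / b := (Nat.le_div_iff_mul_le (hpos.trans_le hb)).2 (by linarith)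
    _ ≤ Fintype.card α / #P.parts := Nat.div_le_div_left hb hpos
    _ ≤ #U := by simpa using hP.average_le_card_part hU

lemma SimpleGraph.regularityReduced_adj_part {a b : α} (h : (G.regularityReduced P ε δ).Adj a b) :
    G.IsUniform ε (P.part a) (P.part b) ∧ δ ≤ G.edgeDensity (P.part a) (P.part b) := by
  obtain ⟨-, U, hU, V, hV, ha, hb, -, hUV, hδ⟩ := h
  rw [P.part_eq_of_mem hU ha, P.part_eq_of_mem hV hb]
  exact ⟨hUV, hδ⟩

theorem SimpleGraph.cliqueFree_regularityReduced_of_hFree [Nonempty α] {γ : Type*} [Fintype γ]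
    {H : SimpleGraph γ} {k : ℕ} (hH : H.Colorable k) (hG : HFree H G) (hε : 0 ≤ ε)
    (hεδ : ε ≤ δ / 2) (hεδm : ε ≤ (δ / 2) ^ Fintype.card γ / (Fintype.card γ + 1)) (hδ : δ ≤ 1)
    (hsize : ∀ U ∈ P.parts, (Fintype.card γ : ℝ) < ε * #U) :
    (G.regularityReduced P ε δ).CliqueFree k := by
  classical
  have hpow : (Fintype.card γ + 1) * ε ≤ (δ - ε) ^ Fintype.card γ := calc
    (Fintype.card γ + 1) * ε ≤ (δ / 2) ^ Fintype.card γ := by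
        rwa [← le_div_iff₀' (by positivity)]
    _ ≤ (δ - ε) ^ Fintype.card γ := by gcongr <;> linarith
  obtain ⟨col⟩ := hH
  refine cliqueFree_iff.2 ⟨fun e => ?_⟩
  have hadj {i j : Fin k} (hij : i ≠ j) := regularityReduced_adj_part (e.toHom.map_adj hij)
  exact not_hFree_of_isUniform (κ := col) (V := fun i => P.part (e i))
    (fun _ _ hxy => col.valid hxy) hε (by linarith) hδ hpow
    (fun _ => hsize _ (P.part_mem.2 (mem_univ _)))
    (fun _ _ hij => (hadj hij).1) (fun _ _ hij => (hadj hij).2) hG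

theorem abs_famCount_sub_famCount_regularityReduced_le [Nonempty α] {r : ℕ}
    (𝓕 : Set (SimpleGraph (Fin r))) (hP : P.IsEquipartition) (hPG : P.IsUniform G ε)
    (hε : 0 < ε) {η : ℝ} (hη : 0 < η) (hεη : ε ≤ η / 8) (hparts : 4 / η ≤ #P.parts) :
    |(famCount 𝓕 G : ℝ) - famCount 𝓕 (G.regularityReduced P ε (η / 4))| ≤
      2 * η * Fintype.card α ^ r := by
  set G' := G.regularityReduced P ε (η / 4)
  set D := {p ∈ (univ ×ˢ univ : Finset (α × α)) | G.Adj p.1 p.2 ∧ ¬G'.Adj p.1 p.2}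
  have hD x y (h : ¬(G.Adj x y ↔ G'.Adj x y)) : (x, y) ∈ D := by
    have : G'.Adj x y → G.Adj x y := fun h' => regularityReduced_le h'
    simp only [D, mem_filter, mem_product, mem_univ, true_and]
    tauto
  have hcount := abs_famCount_sub_mul_sq_le 𝓕 hD fun p hp => G.ne_of_adj (mem_filter.1 hp).2.1
  have hcard := card_filter_adj_not_regularityReduced_adj_le (δ := η / 4) hP hPG hε
    (by positivity) hη hparts
  refine le_of_mul_le_mul_right ?_ (by positivity : (0 : ℝ) < Fintype.card α ^ 2)
  calc |(famCount 𝓕 G : ℝ) - famCount 𝓕 G'| * Fintype.card α ^ 2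
      ≤ #D * Fintype.card α ^ r := hcount
    _ ≤ (4 * ε + η / 2 + 4 * (η / 4)) * Fintype.card α ^ 2 * Fintype.card α ^ r := by gcongr
    _ ≤ 2 * η * Fintype.card α ^ r * Fintype.card α ^ 2 := by
      rw [mul_right_comm]
      gcongr
      linarith

end Reduced

theorem stmt7_general {r k : ℕ} {γ : Type*} [Fintype γ]
    (H : SimpleGraph γ) (hH : H.chromaticNumber = (k : ℕ∞))
    (𝓕 : Set (SimpleGraph (Fin r))) {c : ℝ} (hc : 0 < c) :
    ∃ n0 : ℕ, ∀ n : ℕ, n0 ≤ n → ∀ G : SimpleGraph (Fin n), HFree H G →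
      ∃ G' : SimpleGraph (Fin n), G' ≤ G ∧ G'.CliqueFree k ∧
        |(famCount 𝓕 G : ℝ) - (famCount 𝓕 G' : ℝ)| ≤ c * (n : ℝ) ^ r := by
  classical
  set m := Fintype.card γ
  set ε := min (c / 2) 1
  have hε : 0 < ε := lt_min (by linarith) one_pos
  set ε₁ := min (ε / 8) ((ε / 8) ^ m / (m + 1))
  have hε₁ : 0 < ε₁ := lt_min (by positivity) (by positivity)
  have hε₁ε : ε₁ ≤ ε / 8 := min_le_left _ _
  set l := ⌈4 / ε⌉₊
  set M := ⌊m / ε₁⌋₊ + 1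
  refine ⟨max (SzemerediRegularity.bound ε₁ l * M) l, fun n hn G hG => ?_⟩
  have hl : l ≤ n := le_of_max_le_right hn
  have : Nonempty (Fin n) := ⟨⟨0, (Nat.ceil_pos.2 (by positivity)).trans_le hl⟩⟩
  obtain ⟨P, hP, hlP, hPb, hPG⟩ := szemeredi_regularity G hε₁ (by simpa using hl)
  set G' := G.regularityReduced P ε₁ (ε / 4)
  refine ⟨G', regularityReduced_le, ?_, ?_⟩
  · refine cliqueFree_regularityReduced_of_hFree (H.chromaticNumber_le_iff_colorable.1 hH.le) hG
      hε₁.le (by linarith) ((min_le_right _ _).trans_eq (by ring))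
      (by linarith [min_le_right (c / 2) 1]) fun U hU => ?_
    have hMU : M ≤ #U := hP.le_card_of_mem_parts hPb (le_of_max_le_left (by simpa using hn)) hU
    have hMU' : (⌊m / ε₁⌋₊ + 1 : ℝ) ≤ #U := by exact_mod_cast hMU
    calc (m : ℝ) < (⌊m / ε₁⌋₊ + 1) * ε₁ := (div_lt_iff₀ hε₁).1 (Nat.lt_floor_add_one _)
      _ ≤ ε₁ * #U := by rw [mul_comm]; gcongr
  · calc |(famCount 𝓕 G : ℝ) - famCount 𝓕 G'| ≤ 2 * ε * n ^ r := by
          simpa using abs_famCount_sub_famCount_regularityReduced_le 𝓕 hP hPG hε₁ hε hε₁ε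
            ((Nat.le_ceil _).trans (by exact_mod_cast hlP))
      _ ≤ c * n ^ r := by gcongr; linarith [min_le_left (c / 2) 1]

/-- Removal-lemma corollary: for every family `𝓕` of graphs on `r` vertices, every graph
`H` with chromatic number `k ≥ 3` and every `γ > 0`, for all sufficiently large `n`,
every `H`-free graph `G` on `n` vertices has a `K_k`-free spanning subgraph `G'` with
`|P(𝓕,G) - P(𝓕,G')| ≤ γ·n^r`. -/
theorem stmt7 {r k : ℕ} (hk : 3 ≤ k) {γ : Type*} [Fintype γ]
    (H : SimpleGraph γ) (hH : H.chromaticNumber = (k : ℕ∞))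
    (𝓕 : Set (SimpleGraph (Fin r))) {c : ℝ} (hc : 0 < c) :
    ∃ n0 : ℕ, ∀ n : ℕ, n0 ≤ n → ∀ G : SimpleGraph (Fin n), HFree H G →
      ∃ G' : SimpleGraph (Fin n), G' ≤ G ∧ G'.CliqueFree k ∧
        |(famCount 𝓕 G : ℝ) - (famCount 𝓕 G' : ℝ)| ≤ c * (n : ℝ) ^ r :=
  stmt7_general H hH 𝓕 hc
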